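/- arXiv:math/0607155 — 4 statements merged into one kernel-verified Lean document; each statement's English description precedes it below -/
import Mathlib

section
/- Let C be a triangulated category and suppose given objects X_0,…,X_{d+1} and triangles X_{i+1} → B_i → X_i →^{σ_i} X_{i+1}[1] for 0 ≤ i ≤ d such that Hom(X_0, B_i[i]) = 0 for all 1 ≤ i ≤ d and σ_0 ≠ 0. Then the composition σ_d[d] ∘ σ_{d-1}[d-1] ∘ ⋯ ∘ σ_1[1] ∘ σ_0 : X_0 → X_{d+1}[d+1] is nonzero. -/
/-!
Induction on the length of the chain. For a distinguished triangle `X' ⟶ B ⟶ X ⟶ X'⟦1⟧`,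
shifting by `m` and applying `Hom(A, -)` gives an exact sequence
`Hom(A, B⟦m⟧) ⟶ Hom(A, X⟦m⟧) ⟶ Hom(A, X'⟦m+1⟧)`; when the left term vanishes,
postcomposition with `σ⟦m⟧'` is injective, so it cannot kill the nonzero composite built so far.
-/

open CategoryTheory CategoryTheory.Limits CategoryTheory.Pretriangulated

/-- The iterated composition `σ_{m-1}[m-1] ∘ ⋯ ∘ σ_1[1] ∘ σ_0 : X_0 ⟶ X_m[m]`
(composed with the canonical identifications of iterated shifts). -/
noncomputable def shiftedChainComp {C : Type*} [Category C] [HasShift C ℤ]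
    (X : ℕ → C) (σ : ∀ i : ℕ, X i ⟶ (X (i + 1))⟦(1 : ℤ)⟧) :
    ∀ m : ℕ, (X 0 ⟶ (X m)⟦(m : ℤ)⟧)
  | 0 => (shiftFunctorZero' C ((0 : ℕ) : ℤ) (by norm_num)).inv.app (X 0)
  | (m + 1) =>
      shiftedChainComp X σ m ≫ (σ m)⟦(m : ℤ)⟧' ≫
        ((shiftFunctorAdd' C (1 : ℤ) (m : ℤ) (((m + 1 : ℕ)) : ℤ)
          (by push_cast; ring)).inv.app (X (m + 1)))

namespace CategoryTheory.Pretriangulated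

variable {C : Type*} [Category C] [Preadditive C] [HasZeroObject C] [HasShift C ℤ]
  [∀ n : ℤ, (CategoryTheory.shiftFunctor C n).Additive] [Pretriangulated C]

lemma Triangle.eq_zero_of_comp_shift_map_mor₃_eq_zero {T : Triangle C} (hT : T ∈ distTriang C)
    (m : ℤ) {A : C} (hA : ∀ φ : A ⟶ T.obj₂⟦m⟧, φ = 0) (c : A ⟶ T.obj₃⟦m⟧)
    (hc : c ≫ T.mor₃⟦m⟧' = 0) : c = 0 := by
  have hc' : c ≫ (m.negOnePow • T.mor₃⟦m⟧' ≫ (shiftFunctorComm C 1 m).hom.app T.obj₁) = 0 := by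
    rw [Linear.comp_units_smul, reassoc_of% hc, zero_comp, smul_zero]
  obtain ⟨φ, rfl⟩ := Triangle.coyoneda_exact₃ _ (Triangle.shift_distinguished T hT m) c hc'
  exact (hA φ).symm ▸ zero_comp

end CategoryTheory.Pretriangulated

section shiftedChainComp

variable {C : Type*} [Category C] [Preadditive C] [HasShift C ℤ]
  (X : ℕ → C) (σ : ∀ i : ℕ, X i ⟶ (X (i + 1))⟦(1 : ℤ)⟧)

lemma shiftedChainComp_succ_eq_zero_iff (m : ℕ) :
    shiftedChainComp X σ (m + 1) = 0 ↔ shiftedChainComp X σ m ≫ (σ m)⟦(m : ℤ)⟧' = 0 := by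
  rw [shiftedChainComp, ← Category.assoc, Preadditive.IsIso.comp_right_eq_zero]

lemma shiftedChainComp_one_eq_zero_iff [∀ n : ℤ, (shiftFunctor C n).Additive] :
    shiftedChainComp X σ 1 = 0 ↔ σ 0 = 0 := by
  rw [shiftedChainComp_succ_eq_zero_iff, shiftedChainComp, Preadditive.IsIso.comp_left_eq_zero,
    Functor.map_eq_zero_iff]

end shiftedChainComp

theorem shiftedChainComp_ne_zero
    {C : Type*} [Category C] [Preadditive C] [HasZeroObject C] [HasShift C ℤ]
    [∀ n : ℤ, (shiftFunctor C n).Additive] [Pretriangulated C]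
    (d : ℕ) (X : ℕ → C) (B : ℕ → C)
    (g : ∀ i : ℕ, X (i + 1) ⟶ B i) (f : ∀ i : ℕ, B i ⟶ X i)
    (σ : ∀ i : ℕ, X i ⟶ (X (i + 1))⟦(1 : ℤ)⟧)
    -- the triangles X_{i+1} → B_i → X_i → X_{i+1}[1] are distinguished
    (htri : ∀ i : ℕ, i ≤ d → Triangle.mk (g i) (f i) (σ i) ∈ distTriang C)
    -- Hom(X_0, B_i[i]) = 0 for 1 ≤ i ≤ d
    (hvan : ∀ i : ℕ, 1 ≤ i → i ≤ d → ∀ φ : X 0 ⟶ (B i)⟦(i : ℤ)⟧, φ = 0)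
    (hσ0 : σ 0 ≠ 0) :
    shiftedChainComp X σ (d + 1) ≠ 0 := by
  suffices h : ∀ m ≤ d, shiftedChainComp X σ (m + 1) ≠ 0 from h d le_rfl
  intro m
  induction m with
  | zero => exact fun _ ↦ (shiftedChainComp_one_eq_zero_iff X σ).not.mpr hσ0
  | succ m ih =>
    intro hm hzero
    rw [shiftedChainComp_succ_eq_zero_iff] at hzero
    exact ih (Nat.le_of_succ_le hm) <| Triangle.eq_zero_of_comp_shift_map_mor₃_eq_zero
      (htri (m + 1) hm) _ (hvan (m + 1) (Nat.le_add_left 1 m) hm) _ hzero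
end

section
/- Let C be a triangulated category, and suppose given triangles X_{i+1} → B_i → X_i →^{σ_i} X_{i+1}[1] for 0 ≤ i ≤ d with Hom(X_0, B_i[i]) = 0 for 1 ≤ i ≤ d and σ_0 ≠ 0. Then for all 0 ≤ i < j ≤ d+1, Hom(X_i, X_j[j−i]) ≠ 0. -/
/-!
The nonzero maps are the composites `σ_{i,m} : X_i ⟶ X_{i+m}[m]` of shifted connecting morphisms.
If `σ_{i,m} ≠ 0` and `Hom(X_i, B_{i+m}[m]) = 0`, then `σ_{i,m+1} = σ_{i,m} ≫ σ_{i+m}[m]` is nonzero: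
otherwise `σ_{i,m}` would factor through `B_{i+m}[m]` by exactness of the shifted triangle.
Starting from `σ_0 ≠ 0` this shows `σ_{0,n+1} ≠ 0`, hence `σ_n ≠ 0`, for all `n ≤ d`; starting
again from each `σ_i ≠ 0` gives the claim.
-/

open CategoryTheory CategoryTheory.Limits CategoryTheory.Pretriangulated

section

variable {C : Type*} [Category C]

lemma comp_shift_mor₃_ne_zero [Preadditive C] [HasZeroObject C] [HasShift C ℤ]
    [∀ n : ℤ, (shiftFunctor C n).Additive] [Pretriangulated C]
    {T : Triangle C} (hT : T ∈ distTriang C) (n : ℤ) {A : C}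
    (hA : ∀ χ : A ⟶ T.obj₂⟦n⟧, χ = 0) {ψ : A ⟶ T.obj₃⟦n⟧} (hψ : ψ ≠ 0) :
    ψ ≫ T.mor₃⟦n⟧' ≠ 0 := by
  intro hψ₃
  obtain ⟨χ, rfl⟩ := Triangle.coyoneda_exact₃ _ (Triangle.shift_distinguished _ hT n) ψ (by
    change ψ ≫ (n.negOnePow • (T.mor₃⟦n⟧' ≫ (shiftFunctorComm C 1 n).hom.app T.obj₁)) = 0
    rw [Linear.comp_units_smul, reassoc_of% hψ₃, zero_comp, smul_zero])
  exact hψ ((congrArg (· ≫ _) (hA χ)).trans zero_comp)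

variable [HasShift C ℤ] (X : ℕ → C) (σ : ∀ i : ℕ, X i ⟶ (X (i + 1))⟦(1 : ℤ)⟧)

noncomputable def iterConnecting (i : ℕ) : ∀ n : ℕ, X i ⟶ (X (i + n))⟦(n : ℤ)⟧
  | 0 => (shiftFunctorZero C ℤ).inv.app (X i)
  | n + 1 => iterConnecting i n ≫ (σ (i + n))⟦(n : ℤ)⟧' ≫
      (shiftFunctorAdd' C 1 (n : ℤ) ((n + 1 : ℕ) : ℤ) (by push_cast; ring)).inv.app (X (i + n + 1))

variable [Preadditive C]

lemma iterConnecting_succ_eq_zero_iff (i n : ℕ) :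
    iterConnecting X σ i (n + 1) = 0 ↔ iterConnecting X σ i n ≫ (σ (i + n))⟦(n : ℤ)⟧' = 0 := by
  rw [iterConnecting, ← Category.assoc, Preadditive.IsIso.comp_right_eq_zero]

lemma iterConnecting_succ_eq_zero_of_eq_zero {i n : ℕ} (h : σ (i + n) = 0) :
    iterConnecting X σ i (n + 1) = 0 := by
  rw [iterConnecting_succ_eq_zero_iff, h, Functor.map_zero, comp_zero]

lemma iterConnecting_one_ne_zero [∀ n : ℤ, (shiftFunctor C n).Additive] {i : ℕ} (h : σ i ≠ 0) :
    iterConnecting X σ i 1 ≠ 0 := by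
  rw [Ne, iterConnecting_succ_eq_zero_iff, iterConnecting, Preadditive.IsIso.comp_left_eq_zero,
    Functor.map_eq_zero_iff]
  exact h

lemma iterConnecting_ne_zero [HasZeroObject C] [∀ n : ℤ, (shiftFunctor C n).Additive]
    [Pretriangulated C] {d : ℕ} {B : ℕ → C} {g : ∀ i : ℕ, X (i + 1) ⟶ B i}
    {f : ∀ i : ℕ, B i ⟶ X i} (htri : ∀ i : ℕ, i ≤ d → Triangle.mk (g i) (f i) (σ i) ∈ distTriang C)
    {i : ℕ} (hvan : ∀ k : ℕ, 0 < k → i + k ≤ d → ∀ χ : X i ⟶ (B (i + k))⟦(k : ℤ)⟧, χ = 0)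
    (hσ : σ i ≠ 0) {m : ℕ} (hm : 0 < m) (hmd : i + m ≤ d + 1) :
    iterConnecting X σ i m ≠ 0 := by
  induction m, hm using Nat.le_induction with
  | base => exact iterConnecting_one_ne_zero X σ hσ
  | succ m hm ih =>
    rw [Ne, iterConnecting_succ_eq_zero_iff]
    exact comp_shift_mor₃_ne_zero (htri (i + m) (by omega)) m (hvan m hm (by omega))
      (ih (by omega))

end

theorem hom_shift_ne_zero_of_exchange_triangles
    {C : Type*} [Category C] [Preadditive C] [HasZeroObject C] [HasShift C ℤ]
    [∀ n : ℤ, (shiftFunctor C n).Additive] [Pretriangulated C]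
    (d : ℕ) (X : ℕ → C) (B : ℕ → C)
    (g : ∀ i : ℕ, X (i + 1) ⟶ B i) (f : ∀ i : ℕ, B i ⟶ X i)
    (σ : ∀ i : ℕ, X i ⟶ (X (i + 1))⟦(1 : ℤ)⟧)
    -- the triangles X_{i+1} → B_i → X_i → X_{i+1}[1] are distinguished
    (htri : ∀ i : ℕ, i ≤ d → Triangle.mk (g i) (f i) (σ i) ∈ distTriang C)
    -- Hom(X_i, B_j[j−i]) = 0 for i < j ≤ d
    (hvan : ∀ i j : ℕ, i < j → j ≤ d → ∀ φ : X i ⟶ (B j)⟦((j - i : ℕ) : ℤ)⟧, φ = 0)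
    (hσ0 : σ 0 ≠ 0) :
    ∀ i j : ℕ, i < j → j ≤ d + 1 →
      ∃ φ : X i ⟶ (X j)⟦((j - i : ℕ) : ℤ)⟧, φ ≠ 0 := by
  have hvan' : ∀ i k : ℕ, 0 < k → i + k ≤ d → ∀ χ : X i ⟶ (B (i + k))⟦(k : ℤ)⟧, χ = 0 := by
    intro i k hk hkd
    have := hvan i (i + k) (by omega) hkd
    rwa [Nat.add_sub_cancel_left] at this
  have hσ : ∀ n : ℕ, n ≤ d → σ n ≠ 0 := fun n hn hσn =>
    iterConnecting_ne_zero X σ htri (hvan' 0) hσ0 n.succ_pos (by omega)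
      (iterConnecting_succ_eq_zero_of_eq_zero X σ (by rwa [Nat.zero_add]))
  intro i j hij hj
  obtain ⟨m, rfl⟩ := Nat.exists_eq_add_of_le hij.le
  rw [Nat.add_sub_cancel_left]
  exact ⟨_, iterConnecting_ne_zero X σ htri (hvan' i) (hσ i (by omega)) (by omega) hj⟩
end

section
/- Let H be the representation category of a valued quiver with n vertices, and d ≥ 1. Any basic exceptional object M of the d-cluster category C_d(H) (i.e. Ext^i(M,M) = 0 for 1 ≤ i ≤ d, with pairwise non-isomorphic indecomposable summands) has at most (d+1)·n indecomposable direct summands. -/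
/-!
Sort the summands `M a ≅ Y a⟦k a⟧` by their shift level `k a ∈ {0, …, d}`. Within one level
the objects `Y a` of `H` are pairwise non-isomorphic, since the shift is an equivalence, and
have no mutual `Ext¹`, since `Hom(Y a, Y b⟦1⟧)` embeds by the shift into
`Hom(M a, M b⟦1⟧) = 0`. So each of the `d + 1` levels holds at most `n` summands.
-/

open CategoryTheory CategoryTheory.Limits Finset

namespace CategoryTheory

variable {C : Type*} [Category C]

lemma forall_eq_zero_of_iso [HasZeroMorphisms C] {X₁ X₂ Y₁ Y₂ : C} (e : X₁ ≅ X₂) (e' : Y₁ ≅ Y₂)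
    (h : ∀ φ : X₂ ⟶ Y₂, φ = 0) (ψ : X₁ ⟶ Y₁) : ψ = 0 :=
  (e.homCongr e').injective ((h _).trans (h _).symm)

variable [HasShift C ℤ]

lemma isEmpty_iso_of_isEmpty_iso_shift {M₁ M₂ Y₁ Y₂ : C} {k : ℤ}
    (e₁ : Nonempty (M₁ ≅ Y₁⟦k⟧)) (e₂ : Nonempty (M₂ ≅ Y₂⟦k⟧)) (h : IsEmpty (M₁ ≅ M₂)) :
    IsEmpty (Y₁ ≅ Y₂) :=
  ⟨fun i => h.false (e₁.some ≪≫ (shiftFunctor C k).mapIso i ≪≫ e₂.some.symm)⟩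

variable [HasZeroMorphisms C]

lemma eq_zero_of_forall_shift_eq_zero {X Y : C} (k : ℤ)
    (h : ∀ ψ : X⟦k⟧ ⟶ Y⟦k⟧⟦(1 : ℤ)⟧, ψ = 0) (φ : X ⟶ Y⟦(1 : ℤ)⟧) : φ = 0 :=
  (shiftFunctor C k).map_injective <| (cancel_mono (shiftComm Y 1 k).hom).mp <|
    (h _).trans (h _).symm

lemma forall_ext_one_eq_zero_of_shift {M₁ M₂ Y₁ Y₂ : C} {k : ℤ}
    (e₁ : Nonempty (M₁ ≅ Y₁⟦k⟧)) (e₂ : Nonempty (M₂ ≅ Y₂⟦k⟧))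
    (h : ∀ φ : M₁ ⟶ M₂⟦(1 : ℤ)⟧, φ = 0) (φ : Y₁ ⟶ Y₂⟦(1 : ℤ)⟧) : φ = 0 :=
  eq_zero_of_forall_shift_eq_zero k
    (forall_eq_zero_of_iso e₁.some.symm ((shiftFunctor C 1).mapIso e₂.some.symm) h) φ

end CategoryTheory

theorem basic_exceptional_has_at_most_summands
    {C : Type*} [Category C] [Preadditive C] [HasShift C ℤ]
    (n d : ℕ) (hd : 1 ≤ d)
    -- the objects of C_d(H) lying in (the image of) H
    (inH : C → Prop)
    -- hereditary bound: a basic exceptional family inside H has at most n members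
    (hbound : ∀ (m : ℕ) (f : Fin m → C), (∀ a, inH (f a)) →
      (∀ a b, a ≠ b → IsEmpty (f a ≅ f b)) →
      (∀ a b, ∀ φ : f a ⟶ (f b)⟦(1 : ℤ)⟧, φ = 0) → m ≤ n)
    -- the basic exceptional object M, given by its indecomposable summands M_1,…,M_m
    (m : ℕ) (M : Fin m → C)
    -- M is basic: the summands are pairwise non-isomorphic
    (hbasic : ∀ a b, a ≠ b → IsEmpty (M a ≅ M b))
    -- M is exceptional: Ext^k(M_a, M_b) = 0 for 1 ≤ k ≤ d
    (hexc : ∀ a b, ∀ k : ℤ, 1 ≤ k → k ≤ (d : ℤ) → ∀ φ : M a ⟶ (M b)⟦k⟧, φ = 0)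
    -- classification: each summand is a shift Y⟦k⟧, 0 ≤ k ≤ d, of some Y in H
    (hdecomp : ∀ a, ∃ (Y : C) (k : ℕ), inH Y ∧ k ≤ d ∧ Nonempty (M a ≅ Y⟦(k : ℤ)⟧)) :
    m ≤ (d + 1) * n := by
  choose Y k hY hk he using hdecomp
  have hlevel : ∀ j ∈ range (d + 1), #{a | k a = j} ≤ n := by
    intro j _
    let g := orderEmbOfFin {a | k a = j} rfl
    have hg : ∀ i, Nonempty (M (g i) ≅ (Y (g i))⟦(j : ℤ)⟧) := fun i => by
      have hei := he (g i)
      rwa [(mem_filter.mp (orderEmbOfFin_mem _ rfl i)).2] at hei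
    exact hbound _ (fun i => Y (g i)) (fun i => hY _)
      (fun a b hab => isEmpty_iso_of_isEmpty_iso_shift (hg a) (hg b)
        (hbasic _ _ (g.injective.ne hab)))
      (fun a b => forall_ext_one_eq_zero_of_shift (hg a) (hg b)
        (hexc _ _ 1 le_rfl (by exact_mod_cast hd)))
  calc m = #(univ : Finset (Fin m)) := (card_fin m).symm
    _ ≤ n * #(range (d + 1)) :=
      card_le_mul_card_image_of_maps_to
        (fun a _ => mem_range.mpr (Nat.lt_succ_of_le (hk a))) n hlevel
    _ = (d + 1) * n := by rw [card_range, mul_comm]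
end

section
/- Let Φ be a root system, H the representation category of a corresponding valued quiver, and d ≥ 1. Define the d-compatibility degree of colored almost positive real Schur roots α, β by (α‖β)_{d,H} = length over End(M_α) of Ext^1_{C_d(H)}(M_α, ⊕_{i=0}^{d-1} M_β[i]), where M_α, M_β are the indecomposable exceptional objects of C_d(H) corresponding to α, β. Then (α‖β)_{d,H} = 0 if and only if (β‖α)_{d,H} = 0. -/
/-!
Shifting commutes with finite biproducts, so the vanishing of
`Hom(X, (⊕_{i<d} Y⟦i⟧)⟦1⟧)` is the vanishing of `Ext^j(X, Y)` for all `1 ≤ j ≤ d`.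
The Calabi–Yau duality exchanges `Ext^j(X, Y)` with `Ext^{d+1-j}(Y, X)`, and
`j ↦ d + 1 - j` permutes `{1, …, d}`.
-/

open CategoryTheory CategoryTheory.Limits CategoryTheory.Pretriangulated

lemma Int.forall_Icc_iff_of_reflect {P Q : ℤ → Prop} {a b : ℤ}
    (h : ∀ j, a ≤ j → j ≤ b → (P j ↔ Q (b + a - j))) :
    (∀ j, a ≤ j → j ≤ b → P j) ↔ (∀ j, a ≤ j → j ≤ b → Q j) := by
  refine ⟨fun hP j ha hb => ?_, fun hQ j ha hb => (h j ha hb).2 (hQ _ (by omega) (by omega))⟩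
  have := (h (b + a - j) (by omega) (by omega)).1 (hP _ (by omega) (by omega))
  rwa [sub_sub_cancel] at this

lemma Fin.forall_natCast_add_one_iff {d : ℕ} {P : ℤ → Prop} :
    (∀ i : Fin d, P ((i : ℕ) + 1)) ↔ ∀ j : ℤ, 1 ≤ j → j ≤ d → P j := by
  refine ⟨fun h j h1 h2 => ?_, fun h i => h _ (by omega) (by omega)⟩
  have := h ⟨(j - 1).toNat, by omega⟩
  rwa [Fin.val_mk, Int.toNat_sub_of_le h1, sub_add_cancel] at this

namespace CategoryTheory

section

variable {C : Type*} [Category C]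

lemma subsingleton_hom_congr {X X' Y Y' : C} (e : X ≅ X') (e' : Y ≅ Y') :
    Subsingleton (X ⟶ Y) ↔ Subsingleton (X' ⟶ Y') :=
  (e.homCongr e').subsingleton_congr

variable [HasZeroMorphisms C]

lemma subsingleton_hom_iff_forall_eq_zero {X Y : C} :
    Subsingleton (X ⟶ Y) ↔ ∀ f : X ⟶ Y, f = 0 :=
  subsingleton_iff_forall_eq 0

lemma subsingleton_hom_biproduct_iff {J : Type*} (F : J → C) [HasBiproduct F] (X : C) :
    Subsingleton (X ⟶ ⨁ F) ↔ ∀ j, Subsingleton (X ⟶ F j) := by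
  refine ⟨fun h j => ⟨fun f g => ?_⟩,
    fun h => ⟨fun f g => biproduct.hom_ext _ _ fun j => Subsingleton.elim _ _⟩⟩
  simpa using congrArg (· ≫ biproduct.π F j)
    (Subsingleton.elim (f ≫ biproduct.ι F j) (g ≫ biproduct.ι F j))

end

lemma subsingleton_hom_shift_biproduct_iff {C : Type*} [Category C] [Preadditive C]
    [HasFiniteBiproducts C] [HasShift C ℤ] [∀ k : ℤ, (shiftFunctor C k).Additive]
    (X Y : C) (d : ℕ) :
    Subsingleton (X ⟶ (⨁ fun i : Fin d => Y⟦((i : ℕ) : ℤ)⟧)⟦(1 : ℤ)⟧) ↔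
      ∀ j : ℤ, 1 ≤ j → j ≤ d → Subsingleton (X ⟶ Y⟦j⟧) := by
  rw [subsingleton_hom_congr (Iso.refl X) ((shiftFunctor C (1 : ℤ)).mapBiproduct _),
    subsingleton_hom_biproduct_iff, ← Fin.forall_natCast_add_one_iff]
  exact forall_congr' fun i => subsingleton_hom_congr (Iso.refl X)
    ((shiftFunctorAdd' C ((i : ℕ) : ℤ) 1 _ rfl).app Y).symm

end CategoryTheory

/- The length of `Ext^1(M_α, ⊕_{i<d} M_β[i])` over `End(M_α)` vanishes iff the group does, so
`(α‖β)_{d,H} = 0` is encoded as the vanishing of `Hom(M_α, (⊕_{i<d} M_β⟦i⟧)⟦1⟧)`. -/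
theorem dCompatibilityDegree_zero_symm
    {C : Type*} [Category C] [Preadditive C] [HasZeroObject C]
    [HasFiniteBiproducts C] [HasShift C ℤ]
    [∀ k : ℤ, (shiftFunctor C k).Additive] [Pretriangulated C]
    (d : ℕ) (hd : 1 ≤ d)
    -- the (d+1)-Calabi–Yau property: Ext^j(Y,X) ≅ D Ext^{d+1−j}(X,Y), so that
    -- Ext^j(X,Y) vanishes iff Ext^{d+1-j}(Y,X) does
    (hCY : ∀ (X Y : C) (j : ℤ), 1 ≤ j → j ≤ (d : ℤ) →
      ((∀ f : X ⟶ Y⟦j⟧, f = 0) ↔ (∀ f : Y ⟶ X⟦((d : ℤ) + 1 - j)⟧, f = 0)))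
    -- the indecomposable exceptional objects corresponding to α and β
    (Mα Mβ : C) :
    -- (α‖β)_{d,H} = 0 ↔ (β‖α)_{d,H} = 0
    ((∀ f : Mα ⟶ (⨁ fun i : Fin d => Mβ⟦((i : ℕ) : ℤ)⟧)⟦(1 : ℤ)⟧, f = 0) ↔
      (∀ f : Mβ ⟶ (⨁ fun i : Fin d => Mα⟦((i : ℕ) : ℤ)⟧)⟦(1 : ℤ)⟧, f = 0)) := by
  simp only [← subsingleton_hom_iff_forall_eq_zero] at hCY ⊢
  rw [subsingleton_hom_shift_biproduct_iff, subsingleton_hom_shift_biproduct_iff]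
  exact Int.forall_Icc_iff_of_reflect (hCY Mα Mβ)
end
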